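/- The Gröbner basis of the ideal I_8 = ⟨Y^3 + X^3 Y + X, X^8 + X, Y^8 + Y⟩ in F_8[X,Y] with respect to the weighted ordering ≺_w is {Y^3 + X^3 Y + X, X^8 + X, X^7 Y + Y}; consequently the footprint is Δ = {X^i Y^j : 0 ≤ i ≤ 6, 0 ≤ j ≤ 2} ∪ {X^7}, which has 22 elements. -/

import Mathlib

noncomputable section Stmt9Aux
open MvPolynomial Finset

abbrev K8 : Type := GaloisField 2 3
abbrev MvP : Type := MvPolynomial (Fin 2) K8

instance : Fintype K8 := Fintype.ofFinite _

lemma card_K8 : Fintype.card K8 = 8 := by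
  have h := GaloisField.card 2 3 (by norm_num)
  rwa [Nat.card_eq_fintype_card] at h

lemma K8_pow8 (a : K8) : a ^ 8 = a := by
  have h := FiniteField.pow_card a
  rwa [card_K8] at h

lemma two_eq_zero_K8 : (2 : K8) = 0 := by
  have := CharP.cast_eq_zero K8 2
  exact_mod_cast this

/-- exponent vector (i, j) -/
def fs (i j : ℕ) : Fin 2 →₀ ℕ := Finsupp.single 0 i + Finsupp.single 1 j

@[simp] lemma fs_app0 (i j : ℕ) : fs i j 0 = i := by simp [fs, Finsupp.single_apply]
@[simp] lemma fs_app1 (i j : ℕ) : fs i j 1 = j := by simp [fs, Finsupp.single_apply]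

lemma finsupp2_ext {d e : Fin 2 →₀ ℕ} (h0 : d 0 = e 0) (h1 : d 1 = e 1) : d = e := by
  ext a; fin_cases a
  · exact h0
  · exact h1

lemma eq_fs (d : Fin 2 →₀ ℕ) : d = fs (d 0) (d 1) := finsupp2_ext (by simp) (by simp)

lemma fs_inj {i j i' j' : ℕ} : fs i j = fs i' j' ↔ (i = i' ∧ j = j') := by
  constructor
  · intro h
    exact ⟨by simpa using congrArg (fun d => d 0) h, by simpa using congrArg (fun d => d 1) h⟩
  · rintro ⟨rfl, rfl⟩; rfl

def rel (d e : Fin 2 →₀ ℕ) : Prop :=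
  2 * d 0 + 3 * d 1 < 2 * e 0 + 3 * e 1 ∨
    (2 * d 0 + 3 * d 1 = 2 * e 0 + 3 * e 1 ∧ d 1 < e 1)

def psi (d : Fin 2 →₀ ℕ) : ℕ :=
  (2 * d 0 + 3 * d 1) * (2 * d 0 + 3 * d 1) + 2 * (2 * d 0 + 3 * d 1) + d 1

lemma psi_lt_of_rel {d e : Fin 2 →₀ ℕ} (h : rel d e) : psi d < psi e := by
  unfold rel at h
  unfold psi
  rcases h with h | ⟨h1, h2⟩
  · have hd : d 1 ≤ 2 * d 0 + 3 * d 1 := by omega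
    have h' : 2 * d 0 + 3 * d 1 + 1 ≤ 2 * e 0 + 3 * e 1 := h
    nlinarith [Nat.mul_le_mul h' h']
  · rw [h1]; omega

lemma rel_connex {d e : Fin 2 →₀ ℕ} (h : d ≠ e) : rel d e ∨ rel e d := by
  have hne : ¬ (d 0 = e 0 ∧ d 1 = e 1) := fun ⟨a, b⟩ => h (finsupp2_ext a b)
  unfold rel; omega

lemma rel_irrefl (d : Fin 2 →₀ ℕ) : ¬ rel d d := by unfold rel; omega

lemma rel_trans {d e c : Fin 2 →₀ ℕ} (h1 : rel d e) (h2 : rel e c) : rel d c := by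
  unfold rel at *; omega

lemma rel_add (m : Fin 2 →₀ ℕ) {d e : Fin 2 →₀ ℕ} (h : rel d e) : rel (m + d) (m + e) := by
  unfold rel at *; simp only [Finsupp.add_apply]; omega

lemma psi_inj {d e : Fin 2 →₀ ℕ} (h : psi d = psi e) : d = e := by
  by_contra hne
  rcases rel_connex hne with h' | h' <;> have := psi_lt_of_rel h' <;> omega

def Del (d : Fin 2 →₀ ℕ) : Prop := (d 0 ≤ 6 ∧ d 1 ≤ 2) ∨ (d 0 = 7 ∧ d 1 = 0)

lemma not_Del_iff {d : Fin 2 →₀ ℕ} :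
    ¬ Del d ↔ 3 ≤ d 1 ∨ 8 ≤ d 0 ∨ (7 ≤ d 0 ∧ 1 ≤ d 1) := by unfold Del; omega

/-! generators -/

def G1 : MvP := (X 1) ^ 3 + (X 0) ^ 3 * X 1 + X 0
def G2 : MvP := (X 0) ^ 8 + X 0
def G3 : MvP := (X 1) ^ 8 + X 1
def G4 : MvP := (X 0) ^ 7 * X 1 + X 1

def IsLMdef (f : MvP) (d : Fin 2 →₀ ℕ) : Prop :=
  d ∈ f.support ∧ ∀ e ∈ f.support, e ≠ d → rel e d

lemma monomial_fs (i j : ℕ) (c : K8) :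
    monomial (fs i j) c = C c * X 0 ^ i * X 1 ^ j := by
  rw [X_pow_eq_monomial, X_pow_eq_monomial, C_mul_monomial, monomial_mul]
  simp [fs]

lemma G1_eq : G1 = monomial (fs 0 3) 1 + monomial (fs 3 1) 1 + monomial (fs 1 0) 1 := by
  simp only [monomial_fs, map_one, one_mul, G1]; ring

lemma G2_eq : G2 = monomial (fs 8 0) 1 + monomial (fs 1 0) 1 := by
  simp only [monomial_fs, map_one, one_mul, G2]; ring

lemma G4_eq : G4 = monomial (fs 7 1) 1 + monomial (fs 0 1) 1 := by
  simp only [monomial_fs, map_one, one_mul, G4]; ring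

lemma coeff_lm_G1 : coeff (fs 0 3) G1 = 1 := by
  rw [G1_eq]; simp [coeff_monomial, fs_inj]

lemma coeff_lm_G2 : coeff (fs 8 0) G2 = 1 := by
  rw [G2_eq]; simp [coeff_monomial, fs_inj]

lemma coeff_lm_G4 : coeff (fs 7 1) G4 = 1 := by
  rw [G4_eq]; simp [coeff_monomial, fs_inj]

lemma support_G1 : G1.support ⊆ {fs 0 3, fs 3 1, fs 1 0} := by
  rw [G1_eq]
  intro d hd
  rcases Finset.mem_union.mp (support_add hd) with h | h
  · rcases Finset.mem_union.mp (support_add h) with h' | h'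
    · have := support_monomial_subset h'; simp_all
    · have := support_monomial_subset h'; simp_all
  · have := support_monomial_subset h; simp_all

lemma support_G2 : G2.support ⊆ {fs 8 0, fs 1 0} := by
  rw [G2_eq]
  intro d hd
  rcases Finset.mem_union.mp (support_add hd) with h | h
  · have := support_monomial_subset h; simp_all
  · have := support_monomial_subset h; simp_all

lemma support_G4 : G4.support ⊆ {fs 7 1, fs 0 1} := by
  rw [G4_eq]
  intro d hd
  rcases Finset.mem_union.mp (support_add hd) with h | h
  · have := support_monomial_subset h; simp_all
  · have := support_monomial_subset h; simp_all

lemma isLM_G1 : IsLMdef G1 (fs 0 3) := by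
  constructor
  · rw [mem_support_iff, coeff_lm_G1]; exact one_ne_zero
  · intro e he hne
    have := support_G1 he
    simp only [Finset.mem_insert, Finset.mem_singleton] at this
    rcases this with rfl | rfl | rfl
    · exact absurd rfl hne
    · unfold rel; simp
    · unfold rel; simp

lemma isLM_G2 : IsLMdef G2 (fs 8 0) := by
  constructor
  · rw [mem_support_iff, coeff_lm_G2]; exact one_ne_zero
  · intro e he hne
    have := support_G2 he
    simp only [Finset.mem_insert, Finset.mem_singleton] at this
    rcases this with rfl | rfl
    · exact absurd rfl hne
    · unfold rel; simp

lemma isLM_G4 : IsLMdef G4 (fs 7 1) := by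
  constructor
  · rw [mem_support_iff, coeff_lm_G4]; exact one_ne_zero
  · intro e he hne
    have := support_G4 he
    simp only [Finset.mem_insert, Finset.mem_singleton] at this
    rcases this with rfl | rfl
    · exact absurd rfl hne
    · unfold rel; simp

/-! span equality -/

lemma two_eq_zero_MvP : (2 : MvP) = 0 := by
  rw [← map_ofNat (C : K8 →+* MvP) 2, two_eq_zero_K8, map_zero]

lemma eq1 : G3 = (X 1 ^ 5 + X 0 ^ 3 * X 1 ^ 3 + X 0 ^ 6 * X 1 + X 0 * X 1 ^ 2) * G1
    + (X 0 * X 1 ^ 2) * G2 + G4 := by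
  have h2 := two_eq_zero_MvP
  unfold G1 G2 G3 G4
  linear_combination (-(X 0 ^ 3 * X 1 ^ 6 + X 0 * X 1 ^ 5 + X 0 ^ 6 * X 1 ^ 4
    + X 0 ^ 4 * X 1 ^ 3 + X 0 ^ 9 * X 1 ^ 2 + X 0 ^ 7 * X 1 + X 0 ^ 2 * X 1 ^ 2) : MvP) * h2

lemma g4_mem : G4 ∈ Ideal.span ({G1, G2, G3} : Set MvP) := by
  have e2 : G4 = G3 - (X 1 ^ 5 + X 0 ^ 3 * X 1 ^ 3 + X 0 ^ 6 * X 1 + X 0 * X 1 ^ 2) * G1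
      - (X 0 * X 1 ^ 2) * G2 := by linear_combination -eq1
  rw [e2]
  refine Ideal.sub_mem _ (Ideal.sub_mem _ ?_ ?_) ?_
  · exact Ideal.subset_span (by simp)
  · exact Ideal.mul_mem_left _ _ (Ideal.subset_span (by simp))
  · exact Ideal.mul_mem_left _ _ (Ideal.subset_span (by simp))

lemma g3_mem : G3 ∈ Ideal.span ({G1, G2, G4} : Set MvP) := by
  rw [eq1]
  refine Ideal.add_mem _ (Ideal.add_mem _ ?_ ?_) ?_
  · exact Ideal.mul_mem_left _ _ (Ideal.subset_span (by simp))
  · exact Ideal.mul_mem_left _ _ (Ideal.subset_span (by simp))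
  · exact Ideal.subset_span (by simp)

lemma spanEq : Ideal.span ({G1, G2, G4} : Set MvP) = Ideal.span ({G1, G2, G3} : Set MvP) := by
  apply le_antisymm <;> rw [Ideal.span_le]
  · rintro g (rfl | rfl | rfl)
    · exact Ideal.subset_span (by simp)
    · exact Ideal.subset_span (by simp)
    · exact g4_mem
  · rintro g (rfl | rfl | rfl)
    · exact Ideal.subset_span (by simp)
    · exact Ideal.subset_span (by simp)
    · exact g3_mem

/-! monomial multiples and leading monomials -/

lemma mem_support_monomial_mul {m : Fin 2 →₀ ℕ} {c : K8} {g : MvP} {d : Fin 2 →₀ ℕ}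
    (hd : d ∈ (monomial m c * g).support) : ∃ e ∈ g.support, d = m + e := by
  classical
  have h := support_mul (monomial m c) g hd
  rw [Finset.mem_add] at h
  obtain ⟨b, hb, e, he, rfl⟩ := h
  have hb' := support_monomial_subset hb
  rw [Finset.mem_singleton] at hb'
  exact ⟨e, he, by rw [hb']⟩

lemma isLM_monomial_mul {g : MvP} {lg : Fin 2 →₀ ℕ} (hg : IsLMdef g lg)
    (m : Fin 2 →₀ ℕ) (c : K8) (hc : c ≠ 0) : IsLMdef (monomial m c * g) (m + lg) := by
  constructor
  · rw [mem_support_iff, coeff_monomial_mul]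
    exact mul_ne_zero hc (mem_support_iff.mp hg.1)
  · intro e he hne
    obtain ⟨e', he', rfl⟩ := mem_support_monomial_mul he
    exact rel_add m (hg.2 e' he' (fun h => hne (by rw [h])))

set_option linter.unnecessarySeqFocus false in
lemma exists_gen {d : Fin 2 →₀ ℕ} (hd : ¬ Del d) :
    ∃ g lg m, g ∈ ({G1, G2, G4} : Set MvP) ∧ IsLMdef g lg ∧ coeff lg g = 1 ∧
      m + lg = d ∧ lg ≤ d := by
  rw [not_Del_iff] at hd
  have hle : ∀ i j : ℕ, i ≤ d 0 → j ≤ d 1 → fs i j ≤ d := by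
    intro i j hi hj
    rw [Finsupp.le_def]
    intro a; fin_cases a
    · simpa using hi
    · simpa using hj
  rcases hd with h | h | h
  · refine ⟨G1, fs 0 3, fs (d 0) (d 1 - 3), by simp, isLM_G1, coeff_lm_G1, ?_, hle 0 3 (by omega) h⟩
    apply finsupp2_ext <;> simp [Finsupp.add_apply] <;> omega
  · refine ⟨G2, fs 8 0, fs (d 0 - 8) (d 1), by simp, isLM_G2, coeff_lm_G2, ?_, hle 8 0 h (by omega)⟩
    apply finsupp2_ext <;> simp [Finsupp.add_apply] <;> omega
  · refine ⟨G4, fs 7 1, fs (d 0 - 7) (d 1 - 1), by simp, isLM_G4, coeff_lm_G4, ?_,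
      hle 7 1 h.1 h.2⟩
    apply finsupp2_ext <;> simp [Finsupp.add_apply] <;> omega

lemma gen_mem {g : MvP} (hg : g ∈ ({G1, G2, G4} : Set MvP)) :
    g ∈ Ideal.span ({G1, G2, G3} : Set MvP) := by
  rcases hg with rfl | rfl | rfl
  · exact Ideal.subset_span (by simp)
  · exact Ideal.subset_span (by simp)
  · exact g4_mem

end Stmt9Aux

noncomputable section PolyPart
open Polynomial Finset
lemma two_eq_zero_P : (2 : Polynomial K8) = 0 := by
  rw [← map_ofNat (Polynomial.C : K8 →+* Polynomial K8) 2, two_eq_zero_K8, map_zero]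

lemma cubic_roots (a : K8) (ha : a ≠ 0) :
    ∃ s : Finset K8, s.card = 3 ∧ ∀ b ∈ s, b ^ 3 + a ^ 3 * b + a = 0 := by
  classical
  have h7 : a ^ 7 = 1 := by
    have h : a * a ^ 7 = a * 1 := by
      rw [mul_one, ← pow_succ']
      exact K8_pow8 a
    exact mul_left_cancel₀ ha h
  set q : Polynomial K8 := X ^ 3 + C (a ^ 3) * X + C a with hq
  have hqdeg : q.natDegree = 3 := by
    unfold q
    compute_degree!
  have hq0 : q ≠ 0 := fun h => by simp [h] at hqdeg
  have hC7 : (C a) ^ 7 = 1 := by rw [← C_pow, h7, C_1]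
  have h2 := two_eq_zero_P
  have hdvd : q ∣ X ^ 8 - X := by
    refine ⟨X ^ 5 - C (a ^ 3) * X ^ 3 - C a * X ^ 2 + C (a ^ 6) * X, ?_⟩
    rw [hq, show C (a ^ 3) = (C a) ^ 3 from by rw [C_pow],
      show C (a ^ 6) = (C a) ^ 6 from by rw [C_pow]]
    linear_combination (-(C a) ^ 2 * X ^ 2 - X) * hC7 + ((C a) ^ 4 * X ^ 3 - X) * h2
  have hPdeg : (X ^ 8 - X : Polynomial K8).natDegree = 8 := by compute_degree!
  have hP : (X ^ 8 - X : Polynomial K8) ≠ 0 := fun h => by simp [h] at hPdeg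
  have hroots : (X ^ 8 - X : Polynomial K8).roots = Finset.univ.val := by
    have h := FiniteField.roots_X_pow_card_sub_X K8
    rwa [card_K8] at h
  have hsplitsP : (X ^ 8 - X : Polynomial K8).Splits := by
    rw [splits_iff_card_roots, hroots, hPdeg]
    simpa using card_K8
  have hsq : q.Splits := Splits.of_dvd hsplitsP hP hdvd
  have hcard : Multiset.card q.roots = 3 := by
    have h := splits_iff_card_roots.mp hsq
    rwa [hqdeg] at h
  have hnd : q.roots.Nodup := by
    refine Multiset.nodup_of_le (roots.le_of_dvd hP hdvd) ?_
    rw [hroots]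
    exact Finset.univ.nodup
  refine ⟨q.roots.toFinset, ?_, ?_⟩
  · rw [Multiset.toFinset_card_of_nodup hnd, hcard]
  · intro b hb
    rw [Multiset.mem_toFinset, mem_roots hq0] at hb
    have h := hb
    simp only [IsRoot.def, hq, eval_add, eval_mul, eval_pow, eval_X, eval_C] at h
    exact h
end PolyPart

noncomputable section Stmt9Aux2
open MvPolynomial Finset

lemma vanish {f : MvP} (hf : f ∈ Ideal.span ({G1, G2, G3} : Set MvP)) (a b : K8)
    (hab : b ^ 3 + a ^ 3 * b + a = 0) :
    eval (fun i : Fin 2 => if i = 0 then a else b) f = 0 := by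
  set v : Fin 2 → K8 := fun i => if i = 0 then a else b with hv
  have hadd : ∀ x : K8, x + x = 0 := by
    intro x
    have : (2 : K8) * x = 0 := by rw [two_eq_zero_K8, zero_mul]
    linear_combination this
  refine Submodule.span_induction ?_ ?_ ?_ ?_ hf
  · rintro g (rfl | rfl | rfl)
    · simpa [G1, hv] using hab
    · simp [G2, hv, K8_pow8, hadd]
    · simp [G3, hv, K8_pow8, hadd]
  · simp
  · intro x y _ _ hx hy
    simp [hx, hy]
  · intro r x _ hx
    simp [smul_eq_mul, hx]

/-- evaluation at X = a, leaving Y as polynomial variable -/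
def phi (a : K8) : MvP →+* Polynomial K8 :=
  eval₂Hom Polynomial.C (fun i => if i = 0 then Polynomial.C a else Polynomial.X)

lemma phi_eval (a b : K8) (f : MvP) :
    Polynomial.eval b (phi a f) = eval (fun i : Fin 2 => if i = 0 then a else b) f := by
  induction f using MvPolynomial.induction_on with
  | C r => simp [phi]
  | add p q hp hq => simp [map_add, hp, hq]
  | mul_X p i hp =>
    simp only [map_mul, Polynomial.eval_mul, hp, eval_mul, eval_X]
    congr 1
    simp only [phi, eval₂Hom_X']
    split <;> simp

lemma phi_monomial (a : K8) (i j : ℕ) (c : K8) :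
    phi a (monomial (fs i j) c) = Polynomial.C (c * a ^ i) * Polynomial.X ^ j := by
  rw [monomial_fs]
  simp only [phi, map_mul, map_pow, eval₂Hom_C, eval₂Hom_X']
  norm_num

lemma phi_monomial' (a : K8) (d : Fin 2 →₀ ℕ) (c : K8) :
    phi a (monomial d c) = Polynomial.C (c * a ^ (d 0)) * Polynomial.X ^ (d 1) := by
  have h := phi_monomial a (d 0) (d 1) c
  rwa [← eq_fs d] at h

lemma phi_natDegree_le {f : MvP} (hf : ∀ e ∈ f.support, Del e) (a : K8) :
    (phi a f).natDegree ≤ 2 := by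
  conv_lhs => rw [← support_sum_monomial_coeff f]
  rw [map_sum]
  apply Polynomial.natDegree_sum_le_of_forall_le
  intro d hd
  rw [phi_monomial']
  refine le_trans (Polynomial.natDegree_C_mul_X_pow_le _ _) ?_
  rcases hf d hd with ⟨-, h⟩ | ⟨-, h⟩ <;> omega
def cpoly (f : MvP) (j : ℕ) : Polynomial K8 :=
  ∑ i ∈ Finset.range 8, Polynomial.C (coeff (fs i j) f) * Polynomial.X ^ i

lemma cpoly_coeff (f : MvP) (j i : ℕ) (hi : i < 8) :
    (cpoly f j).coeff i = coeff (fs i j) f := by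
  rw [cpoly, Polynomial.finset_sum_coeff]
  simp only [Polynomial.coeff_C_mul, Polynomial.coeff_X_pow]
  rw [Finset.sum_eq_single i]
  · simp
  · intro b _ hb
    simp [Ne.symm hb]
  · intro h
    exact absurd (Finset.mem_range.mpr hi) h

lemma cpoly_natDegree_le (f : MvP) (j : ℕ) : (cpoly f j).natDegree ≤ 7 := by
  apply Polynomial.natDegree_sum_le_of_forall_le
  intro i hi
  refine le_trans (Polynomial.natDegree_C_mul_X_pow_le _ _) ?_
  exact Nat.lt_succ_iff.mp (Finset.mem_range.mp hi)

lemma cpoly_natDegree_le6 {f : MvP} (hf : ∀ e ∈ f.support, Del e) {j : ℕ} (hj : 1 ≤ j) :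
    (cpoly f j).natDegree ≤ 6 := by
  have h7 : coeff (fs 7 j) f = 0 := by
    rw [← notMem_support_iff]
    intro hmem
    have := hf _ hmem
    unfold Del at this
    simp at this
    omega
  rw [cpoly, Finset.sum_range_succ, h7]
  simp only [map_zero, zero_mul, add_zero]
  apply Polynomial.natDegree_sum_le_of_forall_le
  intro i hi
  refine le_trans (Polynomial.natDegree_C_mul_X_pow_le _ _) ?_
  exact Nat.lt_succ_iff.mp (Finset.mem_range.mp hi)

lemma phi_eq_sum {f : MvP} (hf : ∀ e ∈ f.support, Del e) (a : K8) :
    phi a f = ∑ j ∈ Finset.range 3, Polynomial.C ((cpoly f j).eval a) * Polynomial.X ^ j := by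
  classical
  have hsub : f.support ⊆ (Finset.range 8 ×ˢ Finset.range 3).image (fun p => fs p.1 p.2) := by
    intro d hd
    have hDel := hf d hd
    unfold Del at hDel
    rw [Finset.mem_image]
    refine ⟨(d 0, d 1), ?_, (eq_fs d).symm⟩
    rw [Finset.mem_product, Finset.mem_range, Finset.mem_range]
    constructor <;> simp <;> omega
  have hinj : ∀ p ∈ Finset.range 8 ×ˢ Finset.range 3, ∀ p' ∈ Finset.range 8 ×ˢ Finset.range 3,
      (fun p : ℕ × ℕ => fs p.1 p.2) p = (fun p : ℕ × ℕ => fs p.1 p.2) p' → p = p' := by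
    intro p _ p' _ h
    obtain ⟨h1, h2⟩ := fs_inj.mp h
    exact Prod.ext h1 h2
  have hrep : phi a f = ∑ p ∈ Finset.range 8 ×ˢ Finset.range 3,
      Polynomial.C (coeff (fs p.1 p.2) f * a ^ p.1) * Polynomial.X ^ p.2 := by
    conv_lhs => rw [← support_sum_monomial_coeff f, map_sum]
    rw [Finset.sum_subset hsub ?_]
    · rw [Finset.sum_image hinj]
      exact Finset.sum_congr rfl fun p _ => phi_monomial a p.1 p.2 _
    · intro d _ hd
      rw [notMem_support_iff.mp hd]
      simp
  rw [hrep, Finset.sum_product, Finset.sum_comm]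
  apply Finset.sum_congr rfl
  intro j _
  simp [cpoly, Polynomial.eval_finset_sum, map_sum, Finset.sum_mul]
lemma eval_cpoly_zero {f : MvP} (hI : f ∈ Ideal.span ({G1, G2, G3} : Set MvP))
    (hf : ∀ e ∈ f.support, Del e) {a : K8} (ha : a ≠ 0) {j : ℕ} (hj : j < 3) :
    (cpoly f j).eval a = 0 := by
  obtain ⟨s, hcard, hs⟩ := cubic_roots a ha
  have hphi0 : phi a f = 0 := by
    apply Polynomial.eq_zero_of_natDegree_lt_card_of_eval_eq_zero' _ s
    · intro b hb
      rw [phi_eval]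
      exact vanish hI a b (hs b hb)
    · rw [hcard]
      exact lt_of_le_of_lt (phi_natDegree_le hf a) (by norm_num)
  have h := congrArg (fun p => Polynomial.coeff p j) (phi_eq_sum hf a)
  rw [hphi0] at h
  simp only [Polynomial.coeff_zero] at h
  rw [Polynomial.finset_sum_coeff] at h
  simp only [Polynomial.coeff_C_mul, Polynomial.coeff_X_pow] at h
  rw [Finset.sum_eq_single j] at h
  · simpa using h.symm
  · intro b _ hb
    simp [Ne.symm hb]
  · intro hmem
    exact absurd (Finset.mem_range.mpr hj) hmem

lemma indep {f : MvP} (hI : f ∈ Ideal.span ({G1, G2, G3} : Set MvP))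
    (hf : ∀ e ∈ f.support, Del e) : f = 0 := by
  classical
  have hc : ∀ j, 1 ≤ j → j < 3 → cpoly f j = 0 := by
    intro j h1 h3
    apply Polynomial.eq_zero_of_natDegree_lt_card_of_eval_eq_zero' _ (Finset.univ.erase 0)
    · intro a ha
      exact eval_cpoly_zero hI hf (Finset.ne_of_mem_erase ha) h3
    · rw [Finset.card_erase_of_mem (Finset.mem_univ 0), Finset.card_univ, card_K8]
      have := cpoly_natDegree_le6 hf h1
      omega
  have hc0 : cpoly f 0 = 0 := by
    apply Polynomial.eq_zero_of_natDegree_lt_card_of_eval_eq_zero' _ Finset.univ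
    · intro a _
      by_cases ha : a = 0
      · subst ha
        rw [← Polynomial.coeff_zero_eq_eval_zero, cpoly_coeff f 0 0 (by norm_num)]
        have h00 : eval (fun i : Fin 2 => if i = 0 then (0 : K8) else 0) f = 0 :=
          vanish hI 0 0 (by ring)
        rw [show (fun i : Fin 2 => if i = 0 then (0 : K8) else 0) = (fun _ => (0 : K8)) from
          by funext i; simp, eval_zero'] at h00
        rw [show fs 0 0 = 0 from by apply finsupp2_ext <;> simp]
        rw [← constantCoeff_eq]
        exact h00
      · exact eval_cpoly_zero hI hf ha (by norm_num)
    · rw [Finset.card_univ, card_K8]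
      exact lt_of_le_of_lt (cpoly_natDegree_le f 0) (by norm_num)
  apply MvPolynomial.ext
  intro d
  rw [coeff_zero]
  by_cases hd : d ∈ f.support
  · have hDel := hf d hd
    have hd1 : d 1 < 3 := by unfold Del at hDel; omega
    have hd0 : d 0 < 8 := by unfold Del at hDel; omega
    have h := cpoly_coeff f (d 1) (d 0) hd0
    rw [← eq_fs d] at h
    by_cases h10 : d 1 = 0
    · rw [h10, hc0] at h
      simpa using h.symm
    · rw [hc (d 1) (by omega) hd1] at h
      simpa using h.symm
  · exact notMem_support_iff.mp hd

/-! reduction -/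

lemma reduce : ∀ n : ℕ, ∀ f : MvP, f ∈ Ideal.span ({G1, G2, G3} : Set MvP) →
    ∀ D, coeff D f ≠ 0 →
    (∀ e ∈ f.support, ¬ Del e → rel e D ∧ psi e ≤ n) →
    ∃ f', f' ∈ Ideal.span ({G1, G2, G3} : Set MvP) ∧ coeff D f' ≠ 0 ∧
      ∀ e ∈ f'.support, Del e := by
  intro n
  induction n using Nat.strong_induction_on with
  | _ n IH =>
  intro f hfI D hD hsup
  classical
  by_cases hall : ∀ e ∈ f.support, Del e
  · exact ⟨f, hfI, hD, hall⟩
  push_neg at hall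
  set S := f.support.filter (fun e => ¬ Del e) with hS
  have hSne : S.Nonempty := by
    obtain ⟨e, he, hne⟩ := hall
    exact ⟨e, by simp [hS, he, hne]⟩
  obtain ⟨e, heS, hemax⟩ := Finset.exists_max_image S psi hSne
  have heSup : e ∈ f.support := (Finset.mem_filter.mp heS).1
  have heD : ¬ Del e := (Finset.mem_filter.mp heS).2
  obtain ⟨hrelD, hpsin⟩ := hsup e heSup heD
  obtain ⟨g, lg, m, hgmem, hglm, hglc, hmlg, -⟩ := exists_gen heD
  set c : K8 := coeff e f with hc
  set t : MvP := monomial m c * g with ht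
  have htI : t ∈ Ideal.span ({G1, G2, G3} : Set MvP) :=
    Ideal.mul_mem_left _ _ (gen_mem hgmem)
  have htsup : ∀ d ∈ t.support, d = e ∨ rel d e := by
    intro d hd
    obtain ⟨e', he', rfl⟩ := mem_support_monomial_mul hd
    by_cases h' : e' = lg
    · left; rw [h', hmlg]
    · right; rw [← hmlg]; exact rel_add m (hglm.2 e' he' h')
  have hte : coeff e t = c := by
    rw [ht, ← hmlg, coeff_monomial_mul, hglc, mul_one]
  set f' : MvP := f - t with hf'
  have hf'I : f' ∈ Ideal.span ({G1, G2, G3} : Set MvP) := Ideal.sub_mem _ hfI htI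
  have htD : coeff D t = 0 := by
    rw [← notMem_support_iff]
    intro hmem
    rcases htsup D hmem with rfl | h
    · exact rel_irrefl D hrelD
    · exact rel_irrefl D (rel_trans h hrelD)
  have hD' : coeff D f' ≠ 0 := by
    rw [hf', coeff_sub, htD, sub_zero]; exact hD
  have hce : coeff e f' = 0 := by
    rw [hf', coeff_sub, hte, hc, sub_self]
  have hpsi1 : 1 ≤ psi e := by
    have h := not_Del_iff.mp heD
    unfold psi; omega
  have hsup' : ∀ d ∈ f'.support, ¬ Del d → rel d D ∧ psi d ≤ psi e - 1 := by
    intro d hd hdD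
    have hd2 : d ∈ f.support ∪ t.support := by
      have h := support_sub (σ := Fin 2) f t hd
      simpa using h
    have hdne : d ≠ e := by
      rintro rfl
      exact (mem_support_iff.mp hd) hce
    rcases Finset.mem_union.mp hd2 with h | h
    · have hrd : rel d D := (hsup d h hdD).1
      have hle : psi d ≤ psi e := hemax d (Finset.mem_filter.mpr ⟨h, hdD⟩)
      have hne : psi d ≠ psi e := fun hh => hdne (psi_inj hh)
      exact ⟨hrd, by omega⟩
    · rcases htsup d h with rfl | hrel
      · exact absurd rfl hdne
      · have := psi_lt_of_rel hrel
        exact ⟨rel_trans hrel hrelD, by omega⟩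
  exact IH (psi e - 1) (by omega) f' hf'I D hD' hsup'

lemma lm_not_Del {f : MvP} (hfI : f ∈ Ideal.span ({G1, G2, G3} : Set MvP))
    {D : Fin 2 →₀ ℕ} (hLM : IsLMdef f D) : ¬ Del D := by
  intro hDel
  have hD : coeff D f ≠ 0 := mem_support_iff.mp hLM.1
  have hsup : ∀ e ∈ f.support, ¬ Del e → rel e D ∧ psi e ≤ f.support.sup psi := by
    intro e he hne
    refine ⟨hLM.2 e he ?_, Finset.le_sup he⟩
    rintro rfl; exact hne hDel
  obtain ⟨f', hf'I, hD', hdel⟩ := reduce (f.support.sup psi) f hfI D hD hsup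
  have h0 : f' = 0 := indep hf'I hdel
  rw [h0] at hD'; simp at hD'

lemma existsLM {f : MvP} (hf : f ≠ 0) : ∃ D, IsLMdef f D := by
  have hne : f.support.Nonempty := by
    rw [Finset.nonempty_iff_ne_empty]
    simpa [support_eq_empty] using hf
  obtain ⟨D, hD, hmax⟩ := Finset.exists_max_image f.support psi hne
  refine ⟨D, hD, fun e he hne' => ?_⟩
  rcases rel_connex hne' with h | h
  · exact h
  · exact absurd (psi_lt_of_rel h) (by have := hmax e he; omega)


lemma lm_unique {f : MvP} {D D' : Fin 2 →₀ ℕ} (h : IsLMdef f D) (h' : IsLMdef f D') : D = D' := by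
  by_contra hne
  have h1 := psi_lt_of_rel (h'.2 D h.1 hne)
  have h2 := psi_lt_of_rel (h.2 D' h'.1 (Ne.symm hne))
  omega

lemma ncard_Del :
    {d : Fin 2 →₀ ℕ | (d 0 ≤ 6 ∧ d 1 ≤ 2) ∨ (d 0 = 7 ∧ d 1 = 0)}.ncard = 22 := by
  classical
  have himg : {d : Fin 2 →₀ ℕ | (d 0 ≤ 6 ∧ d 1 ≤ 2) ∨ (d 0 = 7 ∧ d 1 = 0)}
      = (fun p : ℕ × ℕ => fs p.1 p.2) ''
        {p : ℕ × ℕ | (p.1 ≤ 6 ∧ p.2 ≤ 2) ∨ (p.1 = 7 ∧ p.2 = 0)} := by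
    ext d
    simp only [Set.mem_setOf_eq, Set.mem_image]
    constructor
    · intro h
      exact ⟨(d 0, d 1), h, (eq_fs d).symm⟩
    · rintro ⟨p, hp, rfl⟩
      simpa using hp
  have hinj : Function.Injective (fun p : ℕ × ℕ => fs p.1 p.2) := by
    intro p q h
    obtain ⟨h1, h2⟩ := fs_inj.mp h
    exact Prod.ext h1 h2
  rw [himg, Set.ncard_image_of_injective _ hinj]
  have hset : {p : ℕ × ℕ | (p.1 ≤ 6 ∧ p.2 ≤ 2) ∨ (p.1 = 7 ∧ p.2 = 0)} =
      ↑((Finset.range 8 ×ˢ Finset.range 3).filter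
        (fun p => (p.1 ≤ 6 ∧ p.2 ≤ 2) ∨ (p.1 = 7 ∧ p.2 = 0))) := by
    ext p
    simp only [Set.mem_setOf_eq, Finset.coe_filter, Finset.mem_product, Finset.mem_range]
    constructor
    · intro h; exact ⟨by omega, h⟩
    · intro h; exact h.2
  rw [hset, Set.ncard_coe_finset]
  decide

end Stmt9Aux2

open MvPolynomial in
/-- With respect to the weighted ordering `≺_w`, the set
`{Y^3 + X^3 Y + X, X^8 + X, X^7 Y + Y}` is a Gröbner basis of the ideal
`I_8 = ⟨Y^3 + X^3 Y + X, X^8 + X, Y^8 + Y⟩ ⊆ F_8[X,Y]` (i.e. it generates `I_8` and the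
leading monomial of every nonzero element of `I_8` is divisible by the leading monomial of one
of its members); consequently the footprint is
`{X^i Y^j : 0 ≤ i ≤ 6, 0 ≤ j ≤ 2} ∪ {X^7}`, which has 22 elements. -/
theorem stmt9 :
    let K := GaloisField 2 3
    let X : MvPolynomial (Fin 2) K := MvPolynomial.X 0
    let Y : MvPolynomial (Fin 2) K := MvPolynomial.X 1
    let g1 := Y ^ 3 + X ^ 3 * Y + X
    let g2 := X ^ 8 + X
    let g3 := Y ^ 8 + Y
    let g4 := X ^ 7 * Y + Y
    let I8 := Ideal.span {g1, g2, g3}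
    -- the weighted ordering ≺_w on exponent vectors
    let r : (Fin 2 →₀ ℕ) → (Fin 2 →₀ ℕ) → Prop := fun d e =>
      2 * d 0 + 3 * d 1 < 2 * e 0 + 3 * e 1 ∨
        (2 * d 0 + 3 * d 1 = 2 * e 0 + 3 * e 1 ∧ d 1 < e 1)
    -- `IsLM f d` : `d` is the leading monomial of `f` with respect to `≺_w`
    let IsLM : MvPolynomial (Fin 2) K → (Fin 2 →₀ ℕ) → Prop := fun f d =>
      d ∈ f.support ∧ ∀ e ∈ f.support, e ≠ d → r e d
    (Ideal.span {g1, g2, g4} = I8) ∧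
    (∀ f ∈ I8, f ≠ 0 → ∃ g ∈ ({g1, g2, g4} : Set (MvPolynomial (Fin 2) K)),
        ∃ dg df, IsLM g dg ∧ IsLM f df ∧ dg ≤ df) ∧
    ({d : Fin 2 →₀ ℕ | ¬ ∃ f ∈ I8, f ≠ 0 ∧ IsLM f d}
        = {d : Fin 2 →₀ ℕ | (d 0 ≤ 6 ∧ d 1 ≤ 2) ∨ (d 0 = 7 ∧ d 1 = 0)}) ∧
    {d : Fin 2 →₀ ℕ | (d 0 ≤ 6 ∧ d 1 ≤ 2) ∨ (d 0 = 7 ∧ d 1 = 0)}.ncard = 22 := by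
  intro K X Y g1 g2 g3 g4 I8 r IsLM
  refine ⟨spanEq, ?_, ?_, ncard_Del⟩
  · intro f hfI hf0
    obtain ⟨df, hdf⟩ := existsLM hf0
    have hnd : ¬ Del df := lm_not_Del hfI hdf
    obtain ⟨g, lg, m, hgmem, hglm, -, -, hle⟩ := exists_gen hnd
    exact ⟨g, hgmem, lg, df, hglm, hdf, hle⟩
  · ext d
    simp only [Set.mem_setOf_eq]
    constructor
    · intro h
      by_contra hd
      apply h
      have hd' : ¬ Del d := hd
      obtain ⟨g, lg, m, hgmem, hglm, -, hmlg, -⟩ := exists_gen hd'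
      have hLM := isLM_monomial_mul hglm m 1 one_ne_zero
      rw [hmlg] at hLM
      refine ⟨monomial m 1 * g, Ideal.mul_mem_left _ _ (gen_mem hgmem), ?_, hLM⟩
      intro h0
      have := hLM.1
      rw [h0] at this
      simp at this
    · rintro hDel ⟨f, hfI, hf0, hLM⟩
      exact lm_not_Del hfI hLM hDel
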